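/- arXiv:1805.09887 — 2 statements merged into one kernel-verified Lean document; each statement's English description precedes it below -/
import Mathlib

section
/- Let I be an instance of SPA-ST. For any two super-stable matchings M1 and M2 in I, any lecturer l_k that is undersubscribed in M1, and any project p offered by l_k, the number of students assigned to p in M1 equals the number of students assigned to p in M2. -/
open scoped Classical

/-- An instance of the Student-Project Allocation problem with lecturer
preferences over students, with Ties (SPA-ST).  `sPref s p q` means student `s`
ranks project `p` at least as highly as project `q` (`p ⪰_s q`); `lPref k t t'`
means lecturer `k` ranks student `t` at least as highly as student `t'`. -/
structure SPAST (S P L : Type) [Fintype S] [Fintype P] [Fintype L]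
    [DecidableEq S] [DecidableEq P] [DecidableEq L] where
  /-- the lecturer offering each project -/
  lec : P → L
  /-- project capacities -/
  c : P → ℕ
  /-- lecturer capacities -/
  d : L → ℕ
  cpos : ∀ p : P, 0 < c p
  dpos : ∀ k : L, 0 < d k
  /-- the set of projects acceptable to each student -/
  acc : S → Finset P
  sPref : S → P → P → Prop
  lPref : L → S → S → Prop
  sRefl : ∀ s : S, ∀ p ∈ acc s, sPref s p p
  sTrans : ∀ s : S, ∀ p ∈ acc s, ∀ q ∈ acc s, ∀ r ∈ acc s,
    sPref s p q → sPref s q r → sPref s p r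
  sTotal : ∀ s : S, ∀ p ∈ acc s, ∀ q ∈ acc s, sPref s p q ∨ sPref s q p
  lRefl : ∀ k : L, ∀ t : S, (∃ p ∈ acc t, lec p = k) → lPref k t t
  lTrans : ∀ k : L, ∀ t1 t2 t3 : S,
    (∃ p ∈ acc t1, lec p = k) → (∃ p ∈ acc t2, lec p = k) → (∃ p ∈ acc t3, lec p = k) →
    lPref k t1 t2 → lPref k t2 t3 → lPref k t1 t3
  lTotal : ∀ k : L, ∀ t1 t2 : S,
    (∃ p ∈ acc t1, lec p = k) → (∃ p ∈ acc t2, lec p = k) →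
    lPref k t1 t2 ∨ lPref k t2 t1
  capLB : ∀ p : P, c p ≤ d (lec p)
  capUB : ∀ k : L, d k ≤ ∑ p ∈ Finset.univ.filter (fun p => lec p = k), c p

namespace SPAST

variable {S P L : Type} [Fintype S] [Fintype P] [Fintype L]
  [DecidableEq S] [DecidableEq P] [DecidableEq L]

/-- `M` is a matching: pairs are acceptable, each student is matched at most once,
and project and lecturer capacities are respected. -/
def IsMatching (I : SPAST S P L) (M : Finset (S × P)) : Prop :=
  (∀ x ∈ M, x.2 ∈ I.acc x.1) ∧
  (∀ s : S, ∀ p q : P, (s, p) ∈ M → (s, q) ∈ M → p = q) ∧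
  (∀ p : P, (M.filter (fun x => x.2 = p)).card ≤ I.c p) ∧
  (∀ k : L, (M.filter (fun x => I.lec x.2 = k)).card ≤ I.d k)

/-- The set `M(p)` of students assigned to project `p` in `M`. -/
def projAsg (M : Finset (S × P)) (p : P) : Finset S :=
  (M.filter (fun x => x.2 = p)).image Prod.fst

/-- The set `M(l_k)` of students assigned to lecturer `k` in `M`. -/
def lecAsg (I : SPAST S P L) (M : Finset (S × P)) (k : L) : Finset S :=
  (M.filter (fun x => I.lec x.2 = k)).image Prod.fst

/-- `t` is a least-preferred (worst) student of lecturer `k` in the set `T`. -/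
def WorstIn (I : SPAST S P L) (k : L) (T : Finset S) (t : S) : Prop :=
  t ∈ T ∧ ∀ t' ∈ T, I.lPref k t' t

/-- `(s, p)` is a super-blocking pair for `M`. -/
def SuperBlocking (I : SPAST S P L) (M : Finset (S × P)) (s : S) (p : P) : Prop :=
  p ∈ I.acc s ∧ (s, p) ∉ M ∧
  (∀ q : P, (s, q) ∈ M → ¬(I.sPref s q p ∧ ¬I.sPref s p q)) ∧
  (((projAsg M p).card < I.c p ∧ (lecAsg I M (I.lec p)).card < I.d (I.lec p)) ∨
   ((projAsg M p).card < I.c p ∧ (lecAsg I M (I.lec p)).card = I.d (I.lec p) ∧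
     (s ∈ lecAsg I M (I.lec p) ∨
      ∃ t : S, WorstIn I (I.lec p) (lecAsg I M (I.lec p)) t ∧ I.lPref (I.lec p) s t)) ∨
   ((projAsg M p).card = I.c p ∧
     ∃ t : S, WorstIn I (I.lec p) (projAsg M p) t ∧ I.lPref (I.lec p) s t))

/-- `(s, p)` is a weakly-blocking pair for `M`. -/
def WeakBlocking (I : SPAST S P L) (M : Finset (S × P)) (s : S) (p : P) : Prop :=
  p ∈ I.acc s ∧ (s, p) ∉ M ∧
  (∀ q : P, (s, q) ∈ M → I.sPref s p q ∧ ¬I.sPref s q p) ∧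
  (((projAsg M p).card < I.c p ∧ (lecAsg I M (I.lec p)).card < I.d (I.lec p)) ∨
   ((projAsg M p).card < I.c p ∧ (lecAsg I M (I.lec p)).card = I.d (I.lec p) ∧
     (s ∈ lecAsg I M (I.lec p) ∨
      ∃ t : S, WorstIn I (I.lec p) (lecAsg I M (I.lec p)) t ∧
        (I.lPref (I.lec p) s t ∧ ¬I.lPref (I.lec p) t s))) ∨
   ((projAsg M p).card = I.c p ∧
     ∃ t : S, WorstIn I (I.lec p) (projAsg M p) t ∧
       (I.lPref (I.lec p) s t ∧ ¬I.lPref (I.lec p) t s)))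

/-- `M` is a super-stable matching in `I`. -/
def SuperStable (I : SPAST S P L) (M : Finset (S × P)) : Prop :=
  I.IsMatching M ∧ ∀ (s : S) (p : P), ¬SuperBlocking I M s p

/-- `M` is a weakly stable matching in `I`. -/
def WeaklyStable (I : SPAST S P L) (M : Finset (S × P)) : Prop :=
  I.IsMatching M ∧ ∀ (s : S) (p : P), ¬WeakBlocking I M s p

/-- `I` is an SPA-S instance: all preference lists are strictly ordered
(the preorders are antisymmetric). -/
def StrictPrefs (I : SPAST S P L) : Prop :=
  (∀ s : S, ∀ p ∈ I.acc s, ∀ q ∈ I.acc s, I.sPref s p q → I.sPref s q p → p = q) ∧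
  (∀ k : L, ∀ t t' : S, (∃ p ∈ I.acc t, I.lec p = k) → (∃ p ∈ I.acc t', I.lec p = k) →
    I.lPref k t t' → I.lPref k t' t → t = t')

/-- `I'` is an SPA-S instance obtained from `I` by breaking the ties. -/
def TieBreaking (I I' : SPAST S P L) : Prop :=
  I'.lec = I.lec ∧ I'.c = I.c ∧ I'.d = I.d ∧ I'.acc = I.acc ∧
  StrictPrefs I' ∧
  (∀ (s : S) (p q : P), I.sPref s p q → ¬I.sPref s q p →
    I'.sPref s p q ∧ ¬I'.sPref s q p) ∧
  (∀ (k : L) (t t' : S), I.lPref k t t' → ¬I.lPref k t' t →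
    I'.lPref k t t' ∧ ¬I'.lPref k t' t)

end SPAST

/-
Write `W = I.gainers M N` for the students who strictly prefer their project in `N` to their
project in `M`. For every lecturer `l` we have `|M(l) \ W| ≤ |N(l) \ W|`. The engine is an exchange
at a single project `q`: if some `t ∈ N(q)` lies in `W` and some `s ∈ M(q) \ N(q)` does not, then
whichever of `s`, `t` the lecturer ranks at least as high gives a super-blocking pair (for `N`,
resp. `M`). If some `s ∈ M(l) \ W` sits at a project undersubscribed in `N`, super-stability of `N`
forces `l` to be full in `N` with all of `N(l)` ranked above `s`, and then every project of `l`
receiving a student of `W` is full in `M`; otherwise the inequality holds project by project.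

Since `W` is matched in both matchings, summing over lecturers and swapping the roles of `M` and
`N` shows that super-stable matchings have the same size and that all these inequalities are
equalities. If `k` is undersubscribed in `M`, students of `W` can only sit at projects of `k` that
are full in `M`, so `|N(q) ∩ W| ≤ |M(q) ∩ W|` for every project `q` of `k`. This gives
`|N(k)| ≤ |M(k)|`; hence `k` is undersubscribed in `N` too, the equality for `k` splits into
equalities for its projects, and `|N(p)| ≤ |M(p)|` follows. Symmetry finishes the proof.
-/

namespace SPAST

open Finset

lemma mem_projAsg {S P : Type} [DecidableEq S] [DecidableEq P] {M : Finset (S × P)} {t : S}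
    {p : P} : t ∈ projAsg M p ↔ (t, p) ∈ M := by
  simp [projAsg]

variable {S P L : Type} [Fintype S] [Fintype P] [Fintype L]
  [DecidableEq S] [DecidableEq P] [DecidableEq L] {I : SPAST S P L} {M N : Finset (S × P)}
  {s t : S} {p q : P}

def sStrictPref (I : SPAST S P L) (s : S) (p q : P) : Prop :=
  I.sPref s p q ∧ ¬I.sPref s q p

noncomputable def gainers (I : SPAST S P L) (M N : Finset (S × P)) : Finset S :=
  univ.filter fun s => ∃ p q, (s, p) ∈ M ∧ (s, q) ∈ N ∧ I.sStrictPref s q p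

lemma mem_lecAsg {k : L} : t ∈ lecAsg I M k ↔ ∃ q, (t, q) ∈ M ∧ I.lec q = k := by
  simp [lecAsg]

lemma mem_gainers :
    s ∈ I.gainers M N ↔ ∃ p q, (s, p) ∈ M ∧ (s, q) ∈ N ∧ I.sStrictPref s q p := by
  simp [gainers]

lemma projAsg_subset_lecAsg : projAsg M p ⊆ lecAsg I M (I.lec p) :=
  fun _ h => mem_lecAsg.2 ⟨p, mem_projAsg.1 h, rfl⟩

lemma exists_acc_of_mem_lecAsg (hM : I.IsMatching M) {k : L} (h : t ∈ lecAsg I M k) :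
    ∃ q ∈ I.acc t, I.lec q = k := by
  obtain ⟨q, hq, rfl⟩ := mem_lecAsg.1 h
  exact ⟨q, hM.1 _ hq, rfl⟩

lemma card_projAsg_le (hM : I.IsMatching M) (p : P) : (projAsg M p).card ≤ I.c p :=
  card_image_le.trans (hM.2.2.1 p)

lemma card_lecAsg_le (hM : I.IsMatching M) (k : L) : (lecAsg I M k).card ≤ I.d k :=
  card_image_le.trans (hM.2.2.2 k)

lemma gainers_subset_image_fst_left : I.gainers M N ⊆ M.image Prod.fst := fun s h => by
  obtain ⟨_, _, hp, -, -⟩ := mem_gainers.1 h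
  exact mem_image.2 ⟨_, hp, rfl⟩

lemma gainers_subset_image_fst_right : I.gainers M N ⊆ N.image Prod.fst := fun s h => by
  obtain ⟨_, _, -, hq, -⟩ := mem_gainers.1 h
  exact mem_image.2 ⟨_, hq, rfl⟩

lemma notMem_of_mem_gainers (hM : I.IsMatching M) (hN : I.IsMatching N)
    (h : t ∈ I.gainers M N) (htq : (t, q) ∈ N) : (t, q) ∉ M := by
  obtain ⟨p, q', hp, hq', hstrict⟩ := mem_gainers.1 h
  obtain rfl := hN.2.1 t q' q hq' htq
  intro htM
  obtain rfl := hM.2.1 t p q' hp htM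
  exact hstrict.2 hstrict.1

lemma notMem_gainers_of_mem_gainers (hM : I.IsMatching M) (hN : I.IsMatching N)
    (h : t ∈ I.gainers M N) : t ∉ I.gainers N M := by
  obtain ⟨p, q, hp, hq, hpq⟩ := mem_gainers.1 h
  intro h'
  obtain ⟨q', p', hq', hp', hqp⟩ := mem_gainers.1 h'
  obtain rfl := hN.2.1 t q q' hq hq'
  obtain rfl := hM.2.1 t p p' hp hp'
  exact hpq.2 hqp.1

lemma exists_worstIn {k : L} {T : Finset S} (hT : T.Nonempty)
    (hdom : ∀ u ∈ T, ∃ q ∈ I.acc u, I.lec q = k) : ∃ w, I.WorstIn k T w := by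
  induction hT using Finset.Nonempty.cons_induction with
  | singleton a =>
    refine ⟨a, mem_singleton_self a, fun u hu => ?_⟩
    rw [mem_singleton.1 hu]
    exact I.lRefl k a (hdom a (mem_singleton_self a))
  | cons a T _ _ ih =>
    obtain ⟨w, hwT, hw⟩ := ih fun u hu => hdom u (mem_cons_of_mem hu)
    have hda := hdom a (mem_cons_self a T)
    have hdw := hdom w (mem_cons_of_mem hwT)
    rcases I.lTotal k a w hda hdw with haw | hwa
    · refine ⟨w, mem_cons_of_mem hwT, fun u hu => ?_⟩
      rcases mem_cons.1 hu with rfl | hu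
      exacts [haw, hw u hu]
    · refine ⟨a, mem_cons_self a T, fun u hu => ?_⟩
      rcases mem_cons.1 hu with rfl | hu
      · exact I.lRefl k u hda
      · exact I.lTrans k u w a (hdom u (mem_cons_of_mem hu)) hdw hda (hw u hu) hwa

lemma exists_worstIn_lPref {k : L} {T : Finset S} (hs : s ∈ T) (hts : I.lPref k t s)
    (ht : ∃ q ∈ I.acc t, I.lec q = k) (hdom : ∀ u ∈ T, ∃ q ∈ I.acc u, I.lec q = k) :
    ∃ w, I.WorstIn k T w ∧ I.lPref k t w := by
  obtain ⟨w, hwT, hw⟩ := exists_worstIn ⟨s, hs⟩ hdom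
  exact ⟨w, ⟨hwT, hw⟩, I.lTrans k t s w ht (hdom s hs) (hdom w hwT) hts (hw s hs)⟩

lemma forall_not_strict_of_notMem_gainers (htq : (t, q) ∈ N) (hg : t ∉ I.gainers N M) :
    ∀ r, (t, r) ∈ M → ¬I.sStrictPref t r q :=
  fun r hr hstrict => hg (mem_gainers.2 ⟨q, r, htq, hr, hstrict⟩)

-- Under each of the next three hypotheses `(t, q)` would super-block `M`, unless `t` does better
-- in `M`.
theorem SuperStable.mem_gainers_of_undersubscribed (hM : I.SuperStable M) (hN : I.IsMatching N)
    (htq : (t, q) ∈ N) (htM : (t, q) ∉ M) (hq : (projAsg M q).card < I.c q)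
    (hl : (lecAsg I M (I.lec q)).card < I.d (I.lec q)) : t ∈ I.gainers N M := by
  by_contra hg
  exact hM.2 t q
    ⟨hN.1 _ htq, htM, forall_not_strict_of_notMem_gainers htq hg, Or.inl ⟨hq, hl⟩⟩

theorem SuperStable.mem_gainers_of_lPref_mem_lecAsg (hM : I.SuperStable M)
    (hN : I.IsMatching N) (htq : (t, q) ∈ N) (htM : (t, q) ∉ M)
    (hq : (projAsg M q).card < I.c q) (hs : s ∈ lecAsg I M (I.lec q))
    (hts : I.lPref (I.lec q) t s) : t ∈ I.gainers N M := by
  rcases (card_lecAsg_le hM.1 (I.lec q)).lt_or_eq with hl | hl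
  · exact hM.mem_gainers_of_undersubscribed hN htq htM hq hl
  by_contra hg
  obtain ⟨w, hw, htw⟩ := exists_worstIn_lPref hs hts ⟨q, hN.1 _ htq, rfl⟩
    fun u hu => exists_acc_of_mem_lecAsg hM.1 hu
  exact hM.2 t q ⟨hN.1 _ htq, htM, forall_not_strict_of_notMem_gainers htq hg,
    Or.inr (Or.inl ⟨hq, hl, Or.inr ⟨w, hw, htw⟩⟩)⟩

theorem SuperStable.mem_gainers_of_lPref_mem_projAsg (hM : I.SuperStable M)
    (hN : I.IsMatching N) (htq : (t, q) ∈ N) (htM : (t, q) ∉ M) (hs : s ∈ projAsg M q)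
    (hts : I.lPref (I.lec q) t s) : t ∈ I.gainers N M := by
  rcases (card_projAsg_le hM.1 q).lt_or_eq with hq | hq
  · exact hM.mem_gainers_of_lPref_mem_lecAsg hN htq htM hq (projAsg_subset_lecAsg hs) hts
  by_contra hg
  obtain ⟨w, hw, htw⟩ := exists_worstIn_lPref hs hts ⟨q, hN.1 _ htq, rfl⟩
    fun u hu => exists_acc_of_mem_lecAsg hM.1 (projAsg_subset_lecAsg hu)
  exact hM.2 t q ⟨hN.1 _ htq, htM, forall_not_strict_of_notMem_gainers htq hg,
    Or.inr (Or.inr ⟨hq, w, hw, htw⟩)⟩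

theorem mem_gainers_or_mem_gainers (hM : I.SuperStable M) (hN : I.SuperStable N)
    (hs : (s, q) ∈ M) (hsN : (s, q) ∉ N) (ht : (t, q) ∈ N) (htM : (t, q) ∉ M) :
    s ∈ I.gainers M N ∨ t ∈ I.gainers N M := by
  rcases I.lTotal (I.lec q) s t ⟨q, hM.1.1 _ hs, rfl⟩ ⟨q, hN.1.1 _ ht, rfl⟩ with hst | hts
  · exact Or.inl (hN.mem_gainers_of_lPref_mem_projAsg hM.1 hs hsN (mem_projAsg.2 ht) hst)
  · exact Or.inr (hM.mem_gainers_of_lPref_mem_projAsg hN.1 ht htM (mem_projAsg.2 hs) hts)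

theorem sdiff_subset_gainers (hM : I.SuperStable M) (hN : I.SuperStable N)
    (h : (projAsg N q ∩ I.gainers M N).Nonempty) :
    projAsg M q \ projAsg N q ⊆ I.gainers M N := by
  obtain ⟨t, ht⟩ := h
  rw [mem_inter, mem_projAsg] at ht
  intro s hs
  rw [mem_sdiff, mem_projAsg, mem_projAsg] at hs
  exact (mem_gainers_or_mem_gainers hM hN hs.1 hs.2 ht.1
    (notMem_of_mem_gainers hM.1 hN.1 ht.2 ht.1)).resolve_right
    (notMem_gainers_of_mem_gainers hM.1 hN.1 ht.2)

theorem card_projAsg_sdiff_gainers_le (hM : I.SuperStable M) (hN : I.SuperStable N)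
    (h : ∀ s ∈ projAsg M q, s ∉ projAsg N q → s ∉ I.gainers M N → I.c q ≤ (projAsg N q).card) :
    (projAsg M q \ I.gainers M N).card ≤ (projAsg N q \ I.gainers M N).card := by
  by_cases hs : ∃ s ∈ projAsg M q, s ∉ projAsg N q ∧ s ∉ I.gainers M N
  · obtain ⟨s, hsM, hsN, hsW⟩ := hs
    have hNW : Disjoint (projAsg N q) (I.gainers M N) := by
      rw [disjoint_iff_inter_eq_empty, ← not_nonempty_iff_eq_empty]
      exact fun hne => hsW (sdiff_subset_gainers hM hN hne (mem_sdiff.2 ⟨hsM, hsN⟩))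
    calc (projAsg M q \ I.gainers M N).card ≤ (projAsg M q).card := card_le_card sdiff_subset
      _ ≤ I.c q := card_projAsg_le hM.1 q
      _ ≤ (projAsg N q).card := h s hsM hsN hsW
      _ = (projAsg N q \ I.gainers M N).card := by rw [sdiff_eq_self_of_disjoint hNW]
  · push Not at hs
    refine card_le_card fun s hs' => ?_
    rw [mem_sdiff] at hs' ⊢
    exact ⟨by_contra fun hsN => hs'.2 (hs s hs'.1 hsN), hs'.2⟩

theorem card_projAsg_inter_gainers_le (hM : I.SuperStable M) (hN : I.SuperStable N)
    (h : (projAsg N q ∩ I.gainers M N).Nonempty → I.c q ≤ (projAsg M q).card) :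
    (projAsg N q ∩ I.gainers M N).card ≤ (projAsg M q ∩ I.gainers M N).card := by
  rcases (projAsg N q ∩ I.gainers M N).eq_empty_or_nonempty with hempty | hne
  · simp [hempty]
  have hNM := card_sdiff_add_card_inter (projAsg N q) (projAsg M q)
  have hMN := card_sdiff_add_card_inter (projAsg M q) (projAsg N q)
  have hNc := card_projAsg_le hN.1 q
  have hcM := h hne
  rw [inter_comm] at hNM
  calc (projAsg N q ∩ I.gainers M N).card ≤ (projAsg N q \ projAsg M q).card := by
        refine card_le_card fun t ht => ?_
        rw [mem_inter] at ht
        exact mem_sdiff.2 ⟨ht.1, fun htM => notMem_of_mem_gainers hM.1 hN.1 ht.2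
          (mem_projAsg.1 ht.1) (mem_projAsg.1 htM)⟩
    _ ≤ (projAsg M q \ projAsg N q).card := by omega
    _ ≤ (projAsg M q ∩ I.gainers M N).card :=
        card_le_card (subset_inter sdiff_subset (sdiff_subset_gainers hM hN hne))

lemma biUnion_projAsg (k : L) :
    (univ.filter fun q => I.lec q = k).biUnion (projAsg M) = lecAsg I M k := by
  ext t
  simp only [mem_biUnion, mem_filter, mem_univ, true_and, mem_projAsg, mem_lecAsg]
  exact ⟨fun ⟨q, hq, htq⟩ => ⟨q, htq, hq⟩, fun ⟨q, htq, hq⟩ => ⟨q, hq, htq⟩⟩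

lemma biUnion_lecAsg : univ.biUnion (lecAsg I M) = M.image Prod.fst := by
  ext t
  simp [mem_lecAsg]

lemma pairwiseDisjoint_projAsg (hM : I.IsMatching M) (A : Set P) :
    A.PairwiseDisjoint (projAsg M) := by
  intro p _ q _ hpq
  refine disjoint_left.2 fun t hp hq => hpq ?_
  exact hM.2.1 t p q (mem_projAsg.1 hp) (mem_projAsg.1 hq)

lemma pairwiseDisjoint_lecAsg (hM : I.IsMatching M) (A : Set L) :
    A.PairwiseDisjoint (lecAsg I M) := by
  intro k _ l _ hkl
  refine disjoint_left.2 fun t hk hl => hkl ?_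
  obtain ⟨p, hp, rfl⟩ := mem_lecAsg.1 hk
  obtain ⟨q, hq, rfl⟩ := mem_lecAsg.1 hl
  rw [hM.2.1 t p q hp hq]

lemma card_filter_lecAsg (hM : I.IsMatching M) (k : L) (φ : S → Prop) [DecidablePred φ] :
    ((lecAsg I M k).filter φ).card =
      ∑ q ∈ univ.filter (fun q => I.lec q = k), ((projAsg M q).filter φ).card := by
  rw [← biUnion_projAsg, filter_biUnion, card_biUnion]
  exact (pairwiseDisjoint_projAsg hM _).mono fun q => filter_subset φ _

lemma card_lecAsg_sdiff (hM : I.IsMatching M) (k : L) (X : Finset S) :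
    (lecAsg I M k \ X).card =
      ∑ q ∈ univ.filter (fun q => I.lec q = k), (projAsg M q \ X).card := by
  simpa only [filter_notMem_eq_sdiff] using card_filter_lecAsg hM k (· ∉ X)

lemma card_lecAsg_inter (hM : I.IsMatching M) (k : L) (X : Finset S) :
    (lecAsg I M k ∩ X).card =
      ∑ q ∈ univ.filter (fun q => I.lec q = k), (projAsg M q ∩ X).card := by
  simpa only [filter_mem_eq_inter] using card_filter_lecAsg hM k (· ∈ X)

lemma sum_card_lecAsg_sdiff_add_card (hM : I.IsMatching M) (X : Finset S)
    (hX : X ⊆ M.image Prod.fst) :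
    ∑ k, (lecAsg I M k \ X).card + X.card = (M.image Prod.fst).card := by
  have h := card_biUnion ((pairwiseDisjoint_lecAsg hM (univ : Finset L)).mono
    fun k => filter_subset (· ∉ X) (lecAsg I M k))
  rw [← filter_biUnion, biUnion_lecAsg, filter_notMem_eq_sdiff] at h
  simp only [filter_notMem_eq_sdiff] at h
  rw [← h, card_sdiff_add_card_eq_card hX]

theorem c_le_card_projAsg_of_lPref (hM : I.SuperStable M) (hN : I.SuperStable N)
    (ht : t ∈ projAsg N q ∩ I.gainers M N) (hs : s ∈ lecAsg I M (I.lec q))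
    (hts : I.lPref (I.lec q) t s) : I.c q ≤ (projAsg M q).card := by
  rw [mem_inter, mem_projAsg] at ht
  exact not_lt.1 fun hq => notMem_gainers_of_mem_gainers hM.1 hN.1 ht.2
    (hM.mem_gainers_of_lPref_mem_lecAsg hN.1 ht.1 (notMem_of_mem_gainers hM.1 hN.1 ht.2 ht.1)
      hq hs hts)

theorem c_le_card_projAsg_of_undersubscribed (hM : I.SuperStable M) (hN : I.SuperStable N)
    (ht : t ∈ projAsg N q ∩ I.gainers M N)
    (hl : (lecAsg I M (I.lec q)).card < I.d (I.lec q)) : I.c q ≤ (projAsg M q).card := by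
  rw [mem_inter, mem_projAsg] at ht
  exact not_lt.1 fun hq => notMem_gainers_of_mem_gainers hM.1 hN.1 ht.2
    (hM.mem_gainers_of_undersubscribed hN.1 ht.1 (notMem_of_mem_gainers hM.1 hN.1 ht.2 ht.1)
      hq hl)

theorem card_lecAsg_inter_gainers_le (hM : I.SuperStable M) (hN : I.SuperStable N) {l : L}
    (h : ∀ q, I.lec q = l → ∀ t ∈ projAsg N q ∩ I.gainers M N, I.c q ≤ (projAsg M q).card) :
    (lecAsg I N l ∩ I.gainers M N).card ≤ (lecAsg I M l ∩ I.gainers M N).card := by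
  rw [card_lecAsg_inter hN.1, card_lecAsg_inter hM.1]
  exact sum_le_sum fun q hq => card_projAsg_inter_gainers_le hM hN
    fun ⟨t, ht⟩ => h q (mem_filter.1 hq).2 t ht

theorem card_lecAsg_sdiff_gainers_le (hM : I.SuperStable M) (hN : I.SuperStable N) (l : L) :
    (lecAsg I M l \ I.gainers M N).card ≤ (lecAsg I N l \ I.gainers M N).card := by
  by_cases hC : ∃ q s, I.lec q = l ∧ s ∈ projAsg M q ∧ s ∉ projAsg N q ∧
      s ∉ I.gainers M N ∧ (projAsg N q).card < I.c q
  · obtain ⟨q₀, s, rfl, hsM, hsN, hsW, hq₀⟩ := hC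
    rw [mem_projAsg] at hsM hsN
    -- `(s, q₀)` does not super-block `N`: so `N` fills the lecturer with students above `s`
    have hfull : I.d (I.lec q₀) ≤ (lecAsg I N (I.lec q₀)).card := not_lt.1 fun hl =>
      hsW (hN.mem_gainers_of_undersubscribed hM.1 hsM hsN hq₀ hl)
    have habove : ∀ t ∈ lecAsg I N (I.lec q₀), I.lPref (I.lec q₀) t s := fun t ht =>
      (I.lTotal _ t s (exists_acc_of_mem_lecAsg hN.1 ht) ⟨q₀, hM.1.1 _ hsM, rfl⟩).resolve_right
        fun hst => hsW (hN.mem_gainers_of_lPref_mem_lecAsg hM.1 hsM hsN hq₀ ht hst)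
    have hinter := card_lecAsg_inter_gainers_le hM hN (l := I.lec q₀) fun q hq t ht =>
      c_le_card_projAsg_of_lPref hM hN ht (mem_lecAsg.2 ⟨q₀, hsM, hq.symm⟩)
        (hq ▸ habove t (mem_lecAsg.2 ⟨q, mem_projAsg.1 (mem_inter.1 ht).1, hq⟩))
    have hM' := card_sdiff_add_card_inter (lecAsg I M (I.lec q₀)) (I.gainers M N)
    have hN' := card_sdiff_add_card_inter (lecAsg I N (I.lec q₀)) (I.gainers M N)
    have hMd := card_lecAsg_le hM.1 (I.lec q₀)
    omega
  · push Not at hC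
    rw [card_lecAsg_sdiff hM.1, card_lecAsg_sdiff hN.1]
    exact sum_le_sum fun q hq => card_projAsg_sdiff_gainers_le hM hN
      fun s hs hsN hsW => hC q s (mem_filter.1 hq).2 hs hsN hsW

theorem card_image_fst_le (hM : I.SuperStable M) (hN : I.SuperStable N) :
    (M.image Prod.fst).card ≤ (N.image Prod.fst).card := by
  rw [← sum_card_lecAsg_sdiff_add_card hM.1 (I.gainers M N) gainers_subset_image_fst_left,
    ← sum_card_lecAsg_sdiff_add_card hN.1 (I.gainers M N) gainers_subset_image_fst_right]
  exact add_le_add_left (sum_le_sum fun l _ => card_lecAsg_sdiff_gainers_le hM hN l) _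

theorem card_lecAsg_sdiff_gainers_eq (hM : I.SuperStable M) (hN : I.SuperStable N) (l : L) :
    (lecAsg I M l \ I.gainers M N).card = (lecAsg I N l \ I.gainers M N).card := by
  have h := le_antisymm (card_image_fst_le hM hN) (card_image_fst_le hN hM)
  rw [← sum_card_lecAsg_sdiff_add_card hM.1 (I.gainers M N) gainers_subset_image_fst_left,
    ← sum_card_lecAsg_sdiff_add_card hN.1 (I.gainers M N) gainers_subset_image_fst_right,
    add_left_inj, sum_eq_sum_iff_of_le fun l _ => card_lecAsg_sdiff_gainers_le hM hN l] at h
  exact h l (mem_univ l)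

theorem card_projAsg_sdiff_gainers_eq (hM : I.SuperStable M) (hN : I.SuperStable N)
    (hl : (lecAsg I N (I.lec q)).card < I.d (I.lec q)) :
    (projAsg M q \ I.gainers M N).card = (projAsg N q \ I.gainers M N).card := by
  have hle : ∀ q' ∈ univ.filter (fun q' => I.lec q' = I.lec q),
      (projAsg M q' \ I.gainers M N).card ≤ (projAsg N q' \ I.gainers M N).card :=
    fun q' hq' => card_projAsg_sdiff_gainers_le hM hN fun s hs hsN hsW => not_lt.1 fun hq'N =>
      hsW (hN.mem_gainers_of_undersubscribed hM.1 (mem_projAsg.1 hs)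
        (fun h => hsN (mem_projAsg.2 h)) hq'N ((mem_filter.1 hq').2 ▸ hl))
  have h := card_lecAsg_sdiff_gainers_eq hM hN (I.lec q)
  rw [card_lecAsg_sdiff hM.1, card_lecAsg_sdiff hN.1, sum_eq_sum_iff_of_le hle] at h
  exact h q (mem_filter.2 ⟨mem_univ q, rfl⟩)

theorem card_lecAsg_le_of_undersubscribed (hM : I.SuperStable M) (hN : I.SuperStable N) {k : L}
    (hk : (lecAsg I M k).card < I.d k) : (lecAsg I N k).card ≤ (lecAsg I M k).card := by
  have hsdiff := card_lecAsg_sdiff_gainers_eq hM hN k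
  have hinter := card_lecAsg_inter_gainers_le hM hN fun q hq t ht =>
    c_le_card_projAsg_of_undersubscribed hM hN ht (hq ▸ hk)
  have hM' := card_sdiff_add_card_inter (lecAsg I M k) (I.gainers M N)
  have hN' := card_sdiff_add_card_inter (lecAsg I N k) (I.gainers M N)
  omega

theorem card_projAsg_le_of_undersubscribed (hM : I.SuperStable M) (hN : I.SuperStable N)
    (hl : (lecAsg I M (I.lec q)).card < I.d (I.lec q)) :
    (projAsg N q).card ≤ (projAsg M q).card := by
  have hsdiff := card_projAsg_sdiff_gainers_eq hM hN
    ((card_lecAsg_le_of_undersubscribed hM hN hl).trans_lt hl)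
  have hinter := card_projAsg_inter_gainers_le hM hN fun ⟨t, ht⟩ =>
    c_le_card_projAsg_of_undersubscribed hM hN ht hl
  have hM' := card_sdiff_add_card_inter (projAsg M q) (I.gainers M N)
  have hN' := card_sdiff_add_card_inter (projAsg N q) (I.gainers M N)
  omega

end SPAST

open SPAST in
theorem super_stable_project_counts_eq {S P L : Type} [Fintype S] [Fintype P] [Fintype L]
    [DecidableEq S] [DecidableEq P] [DecidableEq L]
    (I : SPAST S P L) (M1 M2 : Finset (S × P))
    (h1 : SuperStable I M1) (h2 : SuperStable I M2)
    (k : L) (hk : (lecAsg I M1 k).card < I.d k) (p : P) (hp : I.lec p = k) :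
    (projAsg M1 p).card = (projAsg M2 p).card := by
  subst hp
  have hk2 := (card_lecAsg_le_of_undersubscribed h1 h2 hk).trans_lt hk
  exact le_antisymm (card_projAsg_le_of_undersubscribed h2 h1 hk2)
    (card_projAsg_le_of_undersubscribed h1 h2 hk)
end

section
/- Let I be an instance of SPA-ST and let J be the integer programming model of I. Every feasible solution of J (an assignment of values in {0,1} to all the variables satisfying all twelve constraint families) yields a super-stable matching M = {(s_i, p_j) : x_{i,j} = 1} in I, and the objective value Σ_{acceptable (s_i,p_j)} x_{i,j} equals |M|. -/
open scoped Classical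

namespace SPAST

variable {S P L : Type} [Fintype S] [Fintype P] [Fintype L]
  [DecidableEq S] [DecidableEq P] [DecidableEq L]

/-- The variables of the integer programming model `J` of an SPA-ST instance. -/
structure IPSol (S P L : Type) where
  x : S → P → ℤ
  alpha : P → ℤ
  beta : L → ℤ
  eta : L → ℤ
  delta : S → L → ℤ
  gamma : P → ℤ
  lam : S → P → ℤ

/-- a value in {0,1} -/
def Bin (v : ℤ) : Prop := v = 0 ∨ v = 1

/-- θ_{i,j} = 1 − x_{i,j} − Σ_{p' ∈ S_{i,j}} x_{i,p'}, where
`S_{i,j}` is the set of projects `s` strictly prefers to `p`. -/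
noncomputable def theta (I : SPAST S P L) (sol : IPSol S P L) (s : S) (p : P) : ℤ :=
  1 - sol.x s p -
    ∑ p' ∈ (I.acc s).filter (fun p' => I.sPref s p' p ∧ ¬I.sPref s p p'), sol.x s p'

/-- `sol` is a feasible solution of the IP model `J` of `I`: all variables take
values in {0,1} and the twelve constraint families hold. -/
def Feasible (I : SPAST S P L) (sol : IPSol S P L) : Prop :=
  -- binary variables
  (∀ (s : S) (p : P), Bin (sol.x s p)) ∧
  (∀ p : P, Bin (sol.alpha p)) ∧
  (∀ k : L, Bin (sol.beta k)) ∧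
  (∀ k : L, Bin (sol.eta k)) ∧
  (∀ (s : S) (k : L), Bin (sol.delta s k)) ∧
  (∀ p : P, Bin (sol.gamma p)) ∧
  (∀ (s : S), ∀ p ∈ I.acc s, Bin (sol.lam s p)) ∧
  -- x variables exist only for acceptable pairs
  (∀ (s : S) (p : P), p ∉ I.acc s → sol.x s p = 0) ∧
  -- (1)
  (∀ s : S, ∑ p ∈ I.acc s, sol.x s p ≤ 1) ∧
  -- (2)
  (∀ p : P, ∑ s : S, sol.x s p ≤ (I.c p : ℤ)) ∧
  -- (3)
  (∀ k : L, ∑ s : S, ∑ p ∈ Finset.univ.filter (fun p => I.lec p = k), sol.x s p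
    ≤ (I.d k : ℤ)) ∧
  -- (4)
  (∀ p : P, (I.c p : ℤ) * sol.alpha p ≥ (I.c p : ℤ) - ∑ s : S, sol.x s p) ∧
  -- (5)
  (∀ k : L, (I.d k : ℤ) * sol.beta k ≥
    (I.d k : ℤ) - ∑ s : S, ∑ p ∈ Finset.univ.filter (fun p => I.lec p = k), sol.x s p) ∧
  -- (6)
  (∀ (s : S), ∀ p ∈ I.acc s,
    theta I sol s p + sol.alpha p + sol.beta (I.lec p) ≤ 2) ∧
  -- (7)
  (∀ k : L, (I.d k : ℤ) * sol.eta k ≥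
    1 + (∑ s : S, ∑ p ∈ Finset.univ.filter (fun p => I.lec p = k), sol.x s p)
      - (I.d k : ℤ)) ∧
  -- (8)
  (∀ (s : S) (k : L), (I.d k : ℤ) * sol.delta s k ≥
    (∑ s' : S, ∑ p ∈ Finset.univ.filter (fun p => I.lec p = k), sol.x s' p) -
    ∑ s' ∈ Finset.univ.filter (fun s' : S =>
        (∃ q ∈ I.acc s', I.lec q = k) ∧ I.lPref k s' s ∧ ¬I.lPref k s s'),
      ∑ p ∈ Finset.univ.filter (fun p => I.lec p = k), sol.x s' p) ∧
  -- (9)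
  (∀ (s : S), ∀ p ∈ I.acc s,
    theta I sol s p + sol.alpha p + sol.eta (I.lec p) + sol.delta s (I.lec p) ≤ 3) ∧
  -- (10)
  (∀ p : P, (I.c p : ℤ) * sol.gamma p ≥ 1 + (∑ s : S, sol.x s p) - (I.c p : ℤ)) ∧
  -- (11)
  (∀ (s : S), ∀ p ∈ I.acc s, (I.c p : ℤ) * sol.lam s p ≥
    (∑ s' : S, sol.x s' p) -
    ∑ s' ∈ Finset.univ.filter (fun s' : S =>
        p ∈ I.acc s' ∧ I.lPref (I.lec p) s' s ∧ ¬I.lPref (I.lec p) s s'),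
      sol.x s' p) ∧
  -- (12)
  (∀ (s : S), ∀ p ∈ I.acc s,
    theta I sol s p + sol.gamma p + sol.lam s p ≤ 2)

/-- The matching `{(s_i, p_j) : x_{i,j} = 1}` derived from an IP solution. -/
def matchOf (sol : IPSol S P L) : Finset (S × P) :=
  Finset.univ.filter (fun y : S × P => sol.x y.1 y.2 = 1)

end SPAST

/-! The `x`-variables of a feasible solution form a matching by (1)–(3). For a super-blocking
pair `(s, p)` with `k = l(p)` we get `θ_{s,p} = 1`. In case (i), constraints (4) and (5) force
`α_p = β_k = 1`, contradicting (6); in case (ii), (4), (7) and (8) force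
`α_p = η_k = δ_{s,k} = 1`, contradicting (9); in case (iii), (10) and (11) force
`γ_p = λ_{s,p} = 1`, contradicting (12). -/

open Finset

lemma Finset.add_sum_le_sum_of_insert_subset {α M : Type*} [DecidableEq α] [AddCommMonoid M]
    [PartialOrder M] [IsOrderedAddMonoid M] {s D : Finset α} {t : α} {f : α → M}
    (hD : insert t D ⊆ s) (ht : t ∉ D) (hf : ∀ i ∈ s, 0 ≤ f i) :
    f t + ∑ i ∈ D, f i ≤ ∑ i ∈ s, f i := by
  rw [← sum_insert ht]
  exact sum_le_sum_of_subset_of_nonneg hD fun i hi _ => hf i hi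

namespace SPAST

lemma Bin.nonneg {v : ℤ} (hv : Bin v) : 0 ≤ v := by
  rcases hv with rfl | rfl <;> norm_num

lemma Bin.eq_one_of_one_le_mul {v c : ℤ} (hv : Bin v) (h : 1 ≤ c * v) : v = 1 := by
  rcases hv with rfl | rfl
  · simp at h
  · rfl

lemma sum_eq_card_filter_of_bin {α : Type*} (t : Finset α) (f : α → ℤ)
    (hf : ∀ i ∈ t, Bin (f i)) : ∑ i ∈ t, f i = #(t.filter (f · = 1)) := by
  rw [natCast_card_filter]
  refine sum_congr rfl fun i hi => ?_
  rcases hf i hi with h | h <;> simp [h]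

lemma card_projAsg_eq_card_filter {S P : Type} [DecidableEq S] [DecidableEq P]
    (M : Finset (S × P)) (p : P) : #(projAsg M p) = #(M.filter (·.2 = p)) :=
  card_image_of_injOn fun _ ha _ hb hab =>
    Prod.ext hab ((mem_filter.1 ha).2.trans (mem_filter.1 hb).2.symm)

section matchOf

variable {S P L : Type} [Fintype S] [Fintype P]

@[simp]
lemma mem_matchOf {sol : IPSol S P L} {s : S} {p : P} :
    (s, p) ∈ matchOf sol ↔ sol.x s p = 1 := by
  simp [matchOf]

lemma projAsg_matchOf [DecidableEq S] [DecidableEq P] (sol : IPSol S P L) (p : P) :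
    projAsg (matchOf sol) p = univ.filter (sol.x · p = 1) := by
  ext s
  simp [projAsg, matchOf]

end matchOf

variable {S P L : Type} [Fintype S] [Fintype P] [Fintype L]
  [DecidableEq S] [DecidableEq P] [DecidableEq L]

lemma card_lecAsg_eq_card_filter (I : SPAST S P L) {M : Finset (S × P)}
    (huniq : ∀ s p q, (s, p) ∈ M → (s, q) ∈ M → p = q) (k : L) :
    #(lecAsg I M k) = #(M.filter (I.lec ·.2 = k)) :=
  card_image_of_injOn fun a ha b hb hab =>
    Prod.ext hab (huniq a.1 a.2 b.2 (mem_filter.1 ha).1 (hab ▸ (mem_filter.1 hb).1))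

namespace Feasible

variable {I : SPAST S P L} {sol : IPSol S P L}

lemma x_bin (h : Feasible I sol) (s : S) (p : P) : Bin (sol.x s p) := h.1 s p

lemma alpha_bin (h : Feasible I sol) (p : P) : Bin (sol.alpha p) := h.2.1 p

lemma beta_bin (h : Feasible I sol) (k : L) : Bin (sol.beta k) := h.2.2.1 k

lemma eta_bin (h : Feasible I sol) (k : L) : Bin (sol.eta k) := h.2.2.2.1 k

lemma delta_bin (h : Feasible I sol) (s : S) (k : L) : Bin (sol.delta s k) := h.2.2.2.2.1 s k

lemma gamma_bin (h : Feasible I sol) (p : P) : Bin (sol.gamma p) := h.2.2.2.2.2.1 p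

lemma lam_bin (h : Feasible I sol) {s : S} {p : P} (hp : p ∈ I.acc s) : Bin (sol.lam s p) :=
  h.2.2.2.2.2.2.1 s p hp

lemma x_eq_zero (h : Feasible I sol) {s : S} {p : P} (hp : p ∉ I.acc s) : sol.x s p = 0 :=
  h.2.2.2.2.2.2.2.1 s p hp

lemma constr1 (h : Feasible I sol) (s : S) : ∑ p ∈ I.acc s, sol.x s p ≤ 1 :=
  h.2.2.2.2.2.2.2.2.1 s

lemma constr2 (h : Feasible I sol) (p : P) : ∑ s : S, sol.x s p ≤ (I.c p : ℤ) :=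
  h.2.2.2.2.2.2.2.2.2.1 p

lemma constr3 (h : Feasible I sol) (k : L) :
    ∑ s : S, ∑ p ∈ univ.filter (fun p => I.lec p = k), sol.x s p ≤ (I.d k : ℤ) :=
  h.2.2.2.2.2.2.2.2.2.2.1 k

lemma constr4 (h : Feasible I sol) (p : P) :
    (I.c p : ℤ) * sol.alpha p ≥ (I.c p : ℤ) - ∑ s : S, sol.x s p :=
  h.2.2.2.2.2.2.2.2.2.2.2.1 p

lemma constr5 (h : Feasible I sol) (k : L) :
    (I.d k : ℤ) * sol.beta k ≥
      (I.d k : ℤ) - ∑ s : S, ∑ p ∈ univ.filter (fun p => I.lec p = k), sol.x s p :=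
  h.2.2.2.2.2.2.2.2.2.2.2.2.1 k

lemma constr6 (h : Feasible I sol) {s : S} {p : P} (hp : p ∈ I.acc s) :
    theta I sol s p + sol.alpha p + sol.beta (I.lec p) ≤ 2 :=
  h.2.2.2.2.2.2.2.2.2.2.2.2.2.1 s p hp

lemma constr7 (h : Feasible I sol) (k : L) :
    (I.d k : ℤ) * sol.eta k ≥
      1 + (∑ s : S, ∑ p ∈ univ.filter (fun p => I.lec p = k), sol.x s p) - (I.d k : ℤ) :=
  h.2.2.2.2.2.2.2.2.2.2.2.2.2.2.1 k

lemma constr8 (h : Feasible I sol) (s : S) (k : L) :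
    (I.d k : ℤ) * sol.delta s k ≥
      (∑ s' : S, ∑ p ∈ univ.filter (fun p => I.lec p = k), sol.x s' p) -
      ∑ s' ∈ univ.filter (fun s' : S =>
          (∃ q ∈ I.acc s', I.lec q = k) ∧ I.lPref k s' s ∧ ¬I.lPref k s s'),
        ∑ p ∈ univ.filter (fun p => I.lec p = k), sol.x s' p :=
  h.2.2.2.2.2.2.2.2.2.2.2.2.2.2.2.1 s k

lemma constr9 (h : Feasible I sol) {s : S} {p : P} (hp : p ∈ I.acc s) :
    theta I sol s p + sol.alpha p + sol.eta (I.lec p) + sol.delta s (I.lec p) ≤ 3 :=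
  h.2.2.2.2.2.2.2.2.2.2.2.2.2.2.2.2.1 s p hp

lemma constr10 (h : Feasible I sol) (p : P) :
    (I.c p : ℤ) * sol.gamma p ≥ 1 + (∑ s : S, sol.x s p) - (I.c p : ℤ) :=
  h.2.2.2.2.2.2.2.2.2.2.2.2.2.2.2.2.2.1 p

lemma constr11 (h : Feasible I sol) {s : S} {p : P} (hp : p ∈ I.acc s) :
    (I.c p : ℤ) * sol.lam s p ≥
      (∑ s' : S, sol.x s' p) -
      ∑ s' ∈ univ.filter (fun s' : S =>
          p ∈ I.acc s' ∧ I.lPref (I.lec p) s' s ∧ ¬I.lPref (I.lec p) s s'), sol.x s' p :=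
  h.2.2.2.2.2.2.2.2.2.2.2.2.2.2.2.2.2.2.1 s p hp

lemma constr12 (h : Feasible I sol) {s : S} {p : P} (hp : p ∈ I.acc s) :
    theta I sol s p + sol.gamma p + sol.lam s p ≤ 2 :=
  h.2.2.2.2.2.2.2.2.2.2.2.2.2.2.2.2.2.2.2 s p hp

lemma mem_acc_of_mem_matchOf (h : Feasible I sol) {s : S} {p : P}
    (hsp : (s, p) ∈ matchOf sol) : p ∈ I.acc s := by
  by_contra hp
  simp [h.x_eq_zero hp] at hsp

lemma eq_of_mem_matchOf (h : Feasible I sol) {s : S} {p q : P}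
    (hp : (s, p) ∈ matchOf sol) (hq : (s, q) ∈ matchOf sol) : p = q := by
  by_contra hpq
  have hsub : insert p {q} ⊆ I.acc s := by
    simp [insert_subset_iff, h.mem_acc_of_mem_matchOf hp, h.mem_acc_of_mem_matchOf hq]
  have := add_sum_le_sum_of_insert_subset hsub (by simpa using hpq) fun p' _ => (h.x_bin s p').nonneg
  simp only [sum_singleton, mem_matchOf.1 hp, mem_matchOf.1 hq] at this
  linarith [h.constr1 s]

lemma sum_eq_card_projAsg (h : Feasible I sol) (p : P) :
    ∑ s : S, sol.x s p = #(projAsg (matchOf sol) p) := by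
  rw [projAsg_matchOf, sum_eq_card_filter_of_bin _ _ fun s _ => h.x_bin s p]

lemma sum_eq_card_lecAsg (h : Feasible I sol) (k : L) :
    ∑ s : S, ∑ p ∈ univ.filter (fun p => I.lec p = k), sol.x s p =
      #(lecAsg I (matchOf sol) k) := by
  rw [card_lecAsg_eq_card_filter I (fun _ _ _ => h.eq_of_mem_matchOf) k, ← sum_product',
    sum_eq_card_filter_of_bin _ _ fun y _ => h.x_bin y.1 y.2]
  congr 2
  ext
  simp [matchOf, and_comm]

lemma sum_eq_card_matchOf (h : Feasible I sol) :
    ∑ s : S, ∑ p ∈ I.acc s, sol.x s p = #(matchOf sol) := by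
  have hsupp : ∀ s, ∑ p ∈ I.acc s, sol.x s p = ∑ p : P, sol.x s p := fun s =>
    sum_subset (subset_univ _) fun p _ hp => h.x_eq_zero hp
  simp_rw [hsupp]
  rw [← sum_product', sum_eq_card_filter_of_bin _ _ fun y _ => h.x_bin y.1 y.2]
  rfl

lemma isMatching (h : Feasible I sol) : I.IsMatching (matchOf sol) := by
  refine ⟨fun y hy => h.mem_acc_of_mem_matchOf hy, fun _ _ _ => h.eq_of_mem_matchOf,
    fun p => ?_, fun k => ?_⟩
  · rw [← card_projAsg_eq_card_filter]
    exact_mod_cast (h.sum_eq_card_projAsg p).symm.trans_le (h.constr2 p)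
  · rw [← card_lecAsg_eq_card_filter I (fun _ _ _ => h.eq_of_mem_matchOf)]
    exact_mod_cast (h.sum_eq_card_lecAsg k).symm.trans_le (h.constr3 k)

lemma theta_eq_one (h : Feasible I sol) {s : S} {p : P} (hsp : (s, p) ∉ matchOf sol)
    (hpref : ∀ q, (s, q) ∈ matchOf sol → ¬(I.sPref s q p ∧ ¬I.sPref s p q)) :
    theta I sol s p = 1 := by
  have hx : sol.x s p = 0 := (h.x_bin s p).resolve_right (mt mem_matchOf.2 hsp)
  have hbetter : ∑ p' ∈ (I.acc s).filter (fun p' => I.sPref s p' p ∧ ¬I.sPref s p p'),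
      sol.x s p' = 0 :=
    sum_eq_zero fun p' hp' =>
      (h.x_bin s p').resolve_right fun h1 => hpref p' (mem_matchOf.2 h1) (mem_filter.1 hp').2
  rw [theta, hx, hbetter]
  norm_num

lemma alpha_eq_one (h : Feasible I sol) {p : P} (hp : #(projAsg (matchOf sol) p) < I.c p) :
    sol.alpha p = 1 :=
  (h.alpha_bin p).eq_one_of_one_le_mul (c := I.c p) <| by
    have : (#(projAsg (matchOf sol) p) : ℤ) < I.c p := by exact_mod_cast hp
    linarith [h.constr4 p, h.sum_eq_card_projAsg p]

lemma beta_eq_one (h : Feasible I sol) {k : L} (hk : #(lecAsg I (matchOf sol) k) < I.d k) :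
    sol.beta k = 1 :=
  (h.beta_bin k).eq_one_of_one_le_mul (c := I.d k) <| by
    have : (#(lecAsg I (matchOf sol) k) : ℤ) < I.d k := by exact_mod_cast hk
    linarith [h.constr5 k, h.sum_eq_card_lecAsg k]

lemma eta_eq_one (h : Feasible I sol) {k : L} (hk : #(lecAsg I (matchOf sol) k) = I.d k) :
    sol.eta k = 1 :=
  (h.eta_bin k).eq_one_of_one_le_mul (c := I.d k) <| by
    have : (#(lecAsg I (matchOf sol) k) : ℤ) = I.d k := by exact_mod_cast hk
    linarith [h.constr7 k, h.sum_eq_card_lecAsg k]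

lemma gamma_eq_one (h : Feasible I sol) {p : P} (hp : #(projAsg (matchOf sol) p) = I.c p) :
    sol.gamma p = 1 :=
  (h.gamma_bin p).eq_one_of_one_le_mul (c := I.c p) <| by
    have : (#(projAsg (matchOf sol) p) : ℤ) = I.c p := by exact_mod_cast hp
    linarith [h.constr10 p, h.sum_eq_card_projAsg p]

lemma one_le_sum_of_mem_lecAsg (h : Feasible I sol) {t : S} {k : L}
    (ht : t ∈ lecAsg I (matchOf sol) k) :
    1 ≤ ∑ p ∈ univ.filter (fun p => I.lec p = k), sol.x t p := by
  obtain ⟨⟨t', q⟩, hq, rfl⟩ := mem_image.1 ht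
  obtain ⟨htq, hqk⟩ := mem_filter.1 hq
  rw [← mem_matchOf.1 htq]
  exact single_le_sum (fun p _ => (h.x_bin t' p).nonneg) (by simpa using hqk)

-- `t` is counted in the load of `k` but, not being strictly preferred to `s`, not in `D_{s,k}`.
lemma delta_eq_one (h : Feasible I sol) {s t : S} {k : L}
    (ht : t ∈ lecAsg I (matchOf sol) k) (hts : ¬(I.lPref k t s ∧ ¬I.lPref k s t)) :
    sol.delta s k = 1 :=
  (h.delta_bin s k).eq_one_of_one_le_mul (c := I.d k) <| by
    have hD := add_sum_le_sum_of_insert_subset (s := univ) (subset_univ _)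
      (D := univ.filter fun s' : S =>
        (∃ q ∈ I.acc s', I.lec q = k) ∧ I.lPref k s' s ∧ ¬I.lPref k s s')
      (fun htD => hts (mem_filter.1 htD).2.2)
      (f := fun s' => ∑ p ∈ univ.filter (fun p => I.lec p = k), sol.x s' p)
      fun s' _ => sum_nonneg fun p _ => (h.x_bin s' p).nonneg
    linarith [h.constr8 s k, h.one_le_sum_of_mem_lecAsg ht]

lemma lam_eq_one (h : Feasible I sol) {s t : S} {p : P} (hp : p ∈ I.acc s)
    (ht : t ∈ projAsg (matchOf sol) p) (hst : I.lPref (I.lec p) s t) :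
    sol.lam s p = 1 :=
  (h.lam_bin hp).eq_one_of_one_le_mul (c := I.c p) <| by
    have hxt : sol.x t p = 1 := by simpa [projAsg_matchOf] using ht
    have hT := add_sum_le_sum_of_insert_subset (s := univ) (subset_univ _)
      (D := univ.filter fun s' : S =>
        p ∈ I.acc s' ∧ I.lPref (I.lec p) s' s ∧ ¬I.lPref (I.lec p) s s')
      (fun htT => (mem_filter.1 htT).2.2.2 hst) (f := fun s' => sol.x s' p)
      fun s' _ => (h.x_bin s' p).nonneg
    linarith [h.constr11 hp]

lemma not_superBlocking (h : Feasible I sol) (s : S) (p : P) :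
    ¬SuperBlocking I (matchOf sol) s p := by
  rintro ⟨hp, hsp, hpref, hcase⟩
  have hθ := h.theta_eq_one hsp hpref
  rcases hcase with ⟨hpc, hkd⟩ | ⟨hpc, hkd, hs⟩ | ⟨hpc, t, ⟨ht, -⟩, hst⟩
  · linarith [h.constr6 hp, h.alpha_eq_one hpc, h.beta_eq_one hkd]
  · obtain ⟨t, ht, hts⟩ : ∃ t ∈ lecAsg I (matchOf sol) (I.lec p),
        ¬(I.lPref (I.lec p) t s ∧ ¬I.lPref (I.lec p) s t) := by
      rcases hs with hs | ⟨t, ⟨ht, -⟩, hst⟩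
      · exact ⟨s, hs, fun hss => hss.2 hss.1⟩
      · exact ⟨t, ht, fun hts => hts.2 hst⟩
    linarith [h.constr9 hp, h.alpha_eq_one hpc, h.eta_eq_one hkd, h.delta_eq_one ht hts]
  · linarith [h.constr12 hp, h.gamma_eq_one hpc, h.lam_eq_one hp ht hst]

end Feasible

end SPAST

open SPAST in
theorem feasible_solution_gives_super_stable {S P L : Type} [Fintype S] [Fintype P] [Fintype L]
    [DecidableEq S] [DecidableEq P] [DecidableEq L]
    (I : SPAST S P L) (sol : IPSol S P L) (h : Feasible I sol) :
    SuperStable I (matchOf sol) ∧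
      (∑ s : S, ∑ p ∈ I.acc s, sol.x s p) = ((matchOf sol).card : ℤ) :=
  ⟨⟨h.isMatching, h.not_superBlocking⟩, h.sum_eq_card_matchOf⟩
end
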